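/- Let G be a two-step nilpotent π-torsion-free group (i.e., nilpotency class at most 2). Then the π-isolator I_π(G') of the commutator subgroup G' of G is an abelian subgroup of G. -/

import Mathlib

def IsPiNumber (π : Set ℕ) (n : ℕ) : Prop :=
  0 < n ∧ ∀ p : ℕ, p.Prime → p ∣ n → p ∈ π

/-!
Class at most two means that `G'` is central. If `a ^ n ∈ G'` for a π-number `n`, then, since
`⁅a, b⁆` is central, `⁅a, b⁆ ^ n = ⁅a ^ n, b⁆ = 1`, and π-torsion-freeness gives `⁅a, b⁆ = 1`.
So every element of `I_π(G')` commutes with everything; in particular `I_π(G')` is closed under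
products, because `(a * b) ^ (m * n) = a ^ (m * n) * b ^ (m * n)`.
-/

open Subgroup

open scoped commutatorElement

theorem isPiNumber_one (π : Set ℕ) : IsPiNumber π 1 :=
  ⟨one_pos, fun _ hp hdvd => (hp.ne_one (Nat.dvd_one.mp hdvd)).elim⟩

theorem IsPiNumber.mul {π : Set ℕ} {m n : ℕ} (hm : IsPiNumber π m) (hn : IsPiNumber π n) :
    IsPiNumber π (m * n) :=
  ⟨Nat.mul_pos hm.1 hn.1, fun p hp hdvd => (hp.dvd_mul.mp hdvd).elim (hm.2 p hp) (hn.2 p hp)⟩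

section

variable {G : Type*} [Group G]

theorem commutator_le_center_of_nilpotencyClass_le_two [Group.IsNilpotent G]
    (hclass : Group.nilpotencyClass G ≤ 2) : commutator G ≤ center G :=
  commutator_top_right_eq_bot_iff_le_center.mp
    (Subgroup.lowerCentralSeries_eq_bot_iff_nilpotencyClass_le.mpr hclass)

theorem commutatorElement_pow_left {a b : G} (h : Commute a ⁅a, b⁆) (n : ℕ) :
    ⁅a ^ n, b⁆ = ⁅a, b⁆ ^ n := by
  induction n with
  | zero => simp
  | succ n ih =>
    rw [pow_succ', commutatorElement_mul_left_eq_conj_mul, ih, (h.pow_right n).eq,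
      mul_inv_cancel_right, pow_succ]

theorem commute_of_pow_mem_center (hG : commutator G ≤ center G) {π : Set ℕ}
    (hTF : ∀ g : G, ∀ n : ℕ, IsPiNumber π n → g ^ n = 1 → g = 1)
    {a : G} {n : ℕ} (hn : IsPiNumber π n) (ha : a ^ n ∈ center G) (b : G) : Commute a b := by
  have hab : ⁅a, b⁆ ∈ center G := hG (commutator_mem_commutator (mem_top a) (mem_top b))
  have hpow : ⁅a, b⁆ ^ n = 1 := by
    rw [← commutatorElement_pow_left (mem_center_iff.mp hab a),
      commutatorElement_eq_one_iff_mul_comm]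
    exact (mem_center_iff.mp ha b).symm
  exact commutatorElement_eq_one_iff_commute.mp (hTF _ n hn hpow)

def centralPiIsolator (hG : commutator G ≤ center G) (π : Set ℕ)
    (hTF : ∀ g : G, ∀ n : ℕ, IsPiNumber π n → g ^ n = 1 → g = 1)
    (H : Subgroup G) (hH : H ≤ center G) : Subgroup G where
  carrier := {g | ∃ n : ℕ, IsPiNumber π n ∧ g ^ n ∈ H}
  one_mem' := ⟨1, isPiNumber_one π, by simp [H.one_mem]⟩
  mul_mem' := by
    rintro a b ⟨m, hm, ham⟩ ⟨n, hn, hbn⟩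
    refine ⟨m * n, hm.mul hn, ?_⟩
    rw [(commute_of_pow_mem_center hG hTF hm (hH ham) b).mul_pow, pow_mul, mul_comm m, pow_mul]
    exact H.mul_mem (H.pow_mem ham n) (H.pow_mem hbn m)
  inv_mem' := by
    rintro a ⟨m, hm, ham⟩
    exact ⟨m, hm, by rw [inv_pow]; exact H.inv_mem ham⟩

end

theorem isolator_of_commutator_abelian (G : Type*) [Group G]
    [Group.IsNilpotent G]
    (hclass : Group.nilpotencyClass G ≤ 2) (π : Set ℕ)
    (hTF : ∀ g : G, ∀ n : ℕ, IsPiNumber π n → g ^ n = 1 → g = 1) :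
    ∃ K : Subgroup G,
      (K : Set G) = {g : G | ∃ n : ℕ, IsPiNumber π n ∧ g ^ n ∈ commutator G} ∧
      ∀ a b : G, a ∈ K → b ∈ K → a * b = b * a := by
  have hG := commutator_le_center_of_nilpotencyClass_le_two hclass
  refine ⟨centralPiIsolator hG π hTF (commutator G) hG, rfl, ?_⟩
  rintro a b ⟨n, hn, ha⟩ -
  exact commute_of_pow_mem_center hG hTF hn (hG ha) b
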